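/- Let G be a finite abelian group of order k and m, n ≥ 2. For every (m−1)×(n−1) matrix B over G, there are exactly k^{m+n−1} matrices A ∈ G^{m×n} with σ₋(A) = B. -/
import Mathlib


/-- The balanced collapsing sum of an `(m+1) × (n+1)` matrix. -/
def bcs {G : Type*} [AddCommGroup G] {m n : ℕ}
    (A : Matrix (Fin (m + 1)) (Fin (n + 1)) G) : Matrix (Fin m) (Fin n) G :=
  fun i j => A i.castSucc j.castSucc - A i.succ j.castSucc
    - A i.castSucc j.succ + A i.succ j.succ

namespace BcsAux

variable {G : Type*} [AddCommGroup G] {m n : ℕ} (B : Matrix (Fin m) (Fin n) G)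

def B' (a b : ℕ) : G := if h : a < m ∧ b < n then B ⟨a, h.1⟩ ⟨b, h.2⟩ else 0

def S (a b : ℕ) : G := ∑ i ∈ Finset.range a, ∑ j ∈ Finset.range b, B' B i j

lemma S_zero_left (b : ℕ) : S B 0 b = 0 := by simp [S]

lemma S_zero_right (a : ℕ) : S B a 0 = 0 := by simp [S]

lemma S_rec (a b : ℕ) :
    S B (a + 1) (b + 1) = S B (a + 1) b + S B a (b + 1) + B' B a b - S B a b := by
  simp only [S, Finset.sum_range_succ]
  abel

lemma B'_eq (i : Fin m) (j : Fin n) : B' B i.val j.val = B i j := by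
  simp [B']

def Φ (r : Fin (m + 1) → G) (c : Fin n → G) :
    Matrix (Fin (m + 1)) (Fin (n + 1)) G :=
  fun i j => r i + Fin.cases (r 0) c j - r 0 + S B i.val j.val

lemma bcs_Φ (r : Fin (m + 1) → G) (c : Fin n → G) : bcs (Φ B r c) = B := by
  funext i j
  simp only [bcs, Φ, Fin.val_succ, Fin.coe_castSucc]
  rw [S_rec B i.val j.val, B'_eq]
  abel

lemma key {A : Matrix (Fin (m + 1)) (Fin (n + 1)) G} (hA : bcs A = B) :
    ∀ (i : Fin (m + 1)) (j : Fin (n + 1)),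
      A i j = A i 0 + A 0 j - A 0 0 + S B i.val j.val := by
  intro i
  induction i using Fin.induction with
  | zero =>
    intro j
    simp only [Fin.val_zero, S_zero_left]
    abel
  | succ i ih =>
    intro j
    induction j using Fin.induction with
    | zero =>
      simp only [Fin.val_zero, S_zero_right]
      abel
    | succ j ihj =>
      have hb : A i.castSucc j.castSucc - A i.succ j.castSucc
          - A i.castSucc j.succ + A i.succ j.succ = B i j :=
        congrFun (congrFun hA i) j
      have e : A i.succ j.succ = B i j - A i.castSucc j.castSucc
          + A i.succ j.castSucc + A i.castSucc j.succ := by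
        rw [← hb]; abel
      rw [e, ih j.castSucc, ihj, ih j.succ, ← B'_eq B i j]
      simp only [Fin.val_succ, Fin.coe_castSucc]
      rw [S_rec B i.val j.val]
      abel

noncomputable def fiberEquiv :
    {A : Matrix (Fin (m + 1)) (Fin (n + 1)) G // bcs A = B} ≃
      (Fin (m + 1) → G) × (Fin n → G) where
  toFun A := (fun i => A.1 i 0, fun j => A.1 0 j.succ)
  invFun p := ⟨Φ B p.1 p.2, bcs_Φ B p.1 p.2⟩
  left_inv A := by
    apply Subtype.ext
    funext i j
    have h := key B A.2 i j
    rw [h]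
    simp only [Φ]
    congr 1
    congr 1
    congr 1
    induction j using Fin.cases with
    | zero => simp
    | succ j => simp
  right_inv p := by
    ext x
    · simp [Φ, S_zero_right]
    · simp [Φ, S_zero_left]

end BcsAux

theorem stmt7 {G : Type*} [AddCommGroup G] [Finite G] {m n : ℕ}
    (hm : 1 ≤ m) (hn : 1 ≤ n) (k : ℕ) (hk : Nat.card G = k)
    (B : Matrix (Fin m) (Fin n) G) :
    Nat.card {A : Matrix (Fin (m + 1)) (Fin (n + 1)) G // bcs A = B} =
      k ^ (m + n + 1) := by
  rw [Nat.card_congr (BcsAux.fiberEquiv B), Nat.card_prod, Nat.card_fun,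
    Nat.card_fun, hk]
  simp [← pow_add]
  ring
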